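/- Let μ : Σ → B₂(Σ) be a 2-dimensional morphism prolongable on a with shape-symmetric fixed point y = μ^ω(a), let L be the common directive language of the unidimensional morphisms derived from the first row and first column of y, and let S be the abstract numeration system built on L with digits ordered 0 < 1 < ⋯ < r_μ−1 (r_μ being the maximal side length of the images μ(b)). Define the 2-dimensional DFA 𝒜_{μ,a} with alphabet {0,…,r_μ−1}², state set Σ, initial state a, all states final, and partial transitions δ_μ(b,(i,j)) = (μ(b))(i,j) for (i,j) within the shape of μ(b). Then for all m,n ≥ 0, y(m,n) = δ_μ(a, (rep_S(m), rep_S(n))⁰), where (u,v)⁰ pads the shorter of u,v on the left with the digit 0 so that both have equal length and reads the pair as a word over {0,…,r_μ−1}². -/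

import Mathlib

/-- A bounded 2-dimensional picture over `σ`: a shape `(width, height)` together with
its entries (entries outside the domain `[0,width) × [0,height)` are irrelevant). -/
structure Picture (σ : Type*) where
  width : ℕ
  height : ℕ
  entry : ℕ → ℕ → σ

/-- `y : ℕ × ℕ → σ` is the 2-dimensional infinite fixed point `μ^ω(a)` of the
2-dimensional morphism `μ`, prolongable on `a`.  This packages: prolongability
(`(μ a)(0,0) = a`, `y(0,0) = a`); the coherence conditions making the application of
`μ` to `y` well defined (images of letters in a common column of `y` have equal widths,
images of letters in a common row have equal heights, and all images occurring in `y`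
are nonempty); and the fixed-point equation `μ(y) = y`, expressed via the sequences
`col`, `row` of boundary coordinates of the blocks `μ(y(m,n))`. -/
def IsFixedPoint2D {σ : Type*} (μ : σ → Picture σ) (a : σ) (y : ℕ × ℕ → σ) : Prop :=
  y (0, 0) = a ∧ (μ a).entry 0 0 = a ∧
  (∀ m n, 1 ≤ (μ (y (m, n))).width ∧ 1 ≤ (μ (y (m, n))).height) ∧
  (∀ m n n', (μ (y (m, n))).width = (μ (y (m, n'))).width) ∧
  (∀ m m' n, (μ (y (m, n))).height = (μ (y (m', n))).height) ∧
  ∃ col row : ℕ → ℕ,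
    col 0 = 0 ∧ row 0 = 0 ∧
    (∀ m, col (m + 1) = col m + (μ (y (m, 0))).width) ∧
    (∀ n, row (n + 1) = row n + (μ (y (0, n))).height) ∧
    (∀ m n i j, i < (μ (y (m, n))).width → j < (μ (y (m, n))).height →
      y (col m + i, row n + j) = (μ (y (m, n))).entry i j)

/-- The fixed point `y` of `μ` is shape-symmetric: if the shape of `μ(y(m,n))` is
`(s,t)` then the shape of `μ(y(n,m))` is `(t,s)`. -/
def ShapeSymmetric {σ : Type*} (μ : σ → Picture σ) (y : ℕ × ℕ → σ) : Prop :=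
  ∀ m n, (μ (y (m, n))).width = (μ (y (n, m))).height ∧
         (μ (y (m, n))).height = (μ (y (n, m))).width

/-- The unidimensional morphism obtained from the first rows of the `μ`-images. -/
def firstRow {σ : Type*} (μ : σ → Picture σ) (b : σ) : List σ :=
  List.ofFn (fun i : Fin (μ b).width => (μ b).entry i.1 0)

/-- The unidimensional morphism obtained from the first columns of the `μ`-images. -/
def firstCol {σ : Type*} (μ : σ → Picture σ) (b : σ) : List σ :=
  List.ofFn (fun j : Fin (μ b).height => (μ b).entry 0 j.1)

/-- The (partial) transition function `δ_ν` of the automaton `𝒜_{ν,a}` of a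
unidimensional morphism `ν`, extended to words of digits. -/
def deltaW {σ : Type*} (ν : σ → List σ) (b : σ) (w : List ℕ) : Option σ :=
  List.foldlM (fun s i => (ν s)[i]?) b w

/-- The directive language `L_{ν,a}`: the words accepted by `𝒜_{ν,a}` (all states are
final, so acceptance means the run is defined) which do not have `0` as a prefix. -/
def directive {σ : Type*} (ν : σ → List σ) (a : σ) : Set (List ℕ) :=
  {w | (deltaW ν a w).isSome = true ∧ w.head? ≠ some 0}

/-- Genealogical (radix, shortlex) order on words of digits. -/
def GenLtN (u v : List ℕ) : Prop :=
  u.length < v.length ∨ (u.length = v.length ∧ List.Lex (· < ·) u v)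

/-- `rep` is the genealogical enumeration of the language `L`. -/
def IsANSEnum (L : Set (List ℕ)) (rep : ℕ → List ℕ) : Prop :=
  (∀ n, rep n ∈ L) ∧ (∀ w ∈ L, ∃ n, rep n = w) ∧
  (∀ m n, m < n → GenLtN (rep m) (rep n))

/-- The 2-dimensional (partial) transition function of the DFA `𝒜_{μ,a}` associated
with a 2-dimensional morphism: `δ_μ(b,(i,j)) = (μ(b))(i,j)` when `(i,j)` lies within
the shape of `μ(b)`. -/
def delta2 {σ : Type*} (μ : σ → Picture σ) (b : σ) (p : ℕ × ℕ) : Option σ :=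
  if p.1 < (μ b).width ∧ p.2 < (μ b).height then some ((μ b).entry p.1 p.2) else none

/-- `(u,v)⁰`: pad the shorter of `u, v` on the left with the digit `0` so that both
have equal length, and read the pair as a word over pairs of digits. -/
def padZero (u v : List ℕ) : List (ℕ × ℕ) :=
  List.zip (List.replicate (max u.length v.length - u.length) 0 ++ u)
           (List.replicate (max u.length v.length - v.length) 0 ++ v)


/-!
In the automaton of a unidimensional morphism `ν` with fixed point `z`, reading the digit `d`
from the letter at position `q` of `z` leads to the letter at position `S q + d`, where `S q` is
the position at which the block `ν (z q)` starts. So a word `w` of the directive language leads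
to `z (readPos S 0 w)`, and `w ↦ readPos S 0 w` is strictly monotone for the genealogical order
(a word of length `k` lands in the block `[S^[k] p, S^[k] (p+1))`) and onto `ℕ` (every position
lies in the block of an earlier one); hence the `n`-th word of the language is read to
position `n`.

In two dimensions the blocks `μ (y (m, n))` have a width depending only on `m` and a height
depending only on `n`, so `y` is cut into columns by the first row and into rows by the first
column, and reading a pair of words componentwise leads to `y (readPos col 0 u, readPos row 0 v)`.
Leading zeros are harmless because `μ a` has `a` in its corner.
-/

section FixedPoint

variable {σ : Type*}

lemma deltaW_cons (ν : σ → List σ) (b : σ) (d : ℕ) (w : List ℕ) :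
    deltaW ν b (d :: w) = (ν b)[d]?.bind (deltaW ν · w) := by
  simp [deltaW, List.foldlM_cons]

lemma deltaW_append (ν : σ → List σ) (b : σ) (u v : List ℕ) :
    deltaW ν b (u ++ v) = (deltaW ν b u).bind (deltaW ν · v) := by
  simp [deltaW, List.foldlM_append]

lemma deltaW_replicate_zero_append {ν : σ → List σ} {b : σ} (hb : (ν b)[0]? = some b)
    (k : ℕ) (w : List ℕ) : deltaW ν b (List.replicate k 0 ++ w) = deltaW ν b w := by
  induction k with
  | zero => rfl
  | succ k ih => rw [List.replicate_succ, List.cons_append, deltaW_cons, hb, Option.bind_some, ih]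

/-- The position in a fixed point reached by reading the digits of `w` from position `p`,
when `S q` is the position where the image of the `q`-th letter starts: the digit `d` moves
from position `q` to position `S q + d`. -/
def readPos (S : ℕ → ℕ) (p : ℕ) (w : List ℕ) : ℕ := w.foldl (fun q d => S q + d) p

@[simp] lemma readPos_nil (S : ℕ → ℕ) (p : ℕ) : readPos S p [] = p := rfl

@[simp] lemma readPos_cons (S : ℕ → ℕ) (p d : ℕ) (w : List ℕ) :
    readPos S p (d :: w) = readPos S (S p + d) w := rfl

lemma readPos_append (S : ℕ → ℕ) (p : ℕ) (u v : List ℕ) :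
    readPos S p (u ++ v) = readPos S (readPos S p u) v := List.foldl_append

lemma readPos_replicate_zero_append {S : ℕ → ℕ} (hS : S 0 = 0) (k : ℕ) (w : List ℕ) :
    readPos S 0 (List.replicate k 0 ++ w) = readPos S 0 w := by
  induction k with
  | zero => rfl
  | succ k ih => rw [List.replicate_succ, List.cons_append, readPos_cons, hS, ih]

/-- `z` is a fixed point of the unidimensional morphism `ν` with nonempty images, the image
`ν (z k)` occupying the positions `[S k, S (k + 1))` of `z`. -/
structure IsFixedPoint1D (ν : σ → List σ) (z : ℕ → σ) (S : ℕ → ℕ) : Prop where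
  zero : S 0 = 0
  succ : ∀ k, S (k + 1) = S k + (ν (z k)).length
  length_pos : ∀ k, 0 < (ν (z k)).length
  getElem?_eq : ∀ k i, i < (ν (z k)).length → (ν (z k))[i]? = some (z (S k + i))

namespace IsFixedPoint1D

variable {ν : σ → List σ} {z : ℕ → σ} {S : ℕ → ℕ}

lemma strictMono (h : IsFixedPoint1D ν z S) : StrictMono S :=
  strictMono_nat_of_lt_succ fun k => by have := h.length_pos k; rw [h.succ]; omega

lemma getElem?_zero (h : IsFixedPoint1D ν z S) : (ν (z 0))[0]? = some (z 0) := by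
  simpa [h.zero] using h.getElem?_eq 0 0 (h.length_pos 0)

lemma deltaW_cons (h : IsFixedPoint1D ν z S) (p d : ℕ) (w : List ℕ) :
    deltaW ν (z p) (d :: w) =
      if d < (ν (z p)).length then deltaW ν (z (S p + d)) w else none := by
  split_ifs with hd
  · rw [_root_.deltaW_cons, h.getElem?_eq p d hd, Option.bind_some]
  · rw [_root_.deltaW_cons, List.getElem?_eq_none (not_lt.mp hd), Option.bind_none]

lemma isSome_deltaW_cons (h : IsFixedPoint1D ν z S) {p d : ℕ} {w : List ℕ} :
    (deltaW ν (z p) (d :: w)).isSome ↔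
      d < (ν (z p)).length ∧ (deltaW ν (z (S p + d)) w).isSome := by
  rw [h.deltaW_cons]
  split_ifs with hd <;> simp [hd]

lemma deltaW_eq_some (h : IsFixedPoint1D ν z S) {p : ℕ} {w : List ℕ}
    (hw : (deltaW ν (z p) w).isSome) :
    deltaW ν (z p) w = some (z (readPos S p w)) := by
  induction w generalizing p with
  | nil => rfl
  | cons d w ih =>
    obtain ⟨hd, hw⟩ := h.isSome_deltaW_cons.mp hw
    rw [h.deltaW_cons, if_pos hd, ih hw, readPos_cons]

/-- Reading `w` from position `p` stays inside the image of `z p` under `ν ^ |w|`. -/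
lemma readPos_mem_Ico (h : IsFixedPoint1D ν z S) {p : ℕ} {w : List ℕ}
    (hw : (deltaW ν (z p) w).isSome) :
    readPos S p w ∈ Set.Ico (S^[w.length] p) (S^[w.length] (p + 1)) := by
  induction w generalizing p with
  | nil => simp
  | cons d w ih =>
    obtain ⟨hd, hw⟩ := h.isSome_deltaW_cons.mp hw
    obtain ⟨hlo, hhi⟩ := ih hw
    have hmono := h.strictMono.monotone.iterate w.length
    rw [List.length_cons, Function.iterate_succ_apply, Function.iterate_succ_apply, readPos_cons]
    exact ⟨(hmono (Nat.le_add_right _ _)).trans hlo,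
      hhi.trans_le (hmono (by rw [h.succ]; omega))⟩

lemma readPos_lt_of_lex (h : IsFixedPoint1D ν z S) {u v : List ℕ} (hlex : List.Lex (· < ·) u v)
    (hlen : u.length = v.length) {p : ℕ} (hu : (deltaW ν (z p) u).isSome)
    (hv : (deltaW ν (z p) v).isSome) : readPos S p u < readPos S p v := by
  induction hlex generalizing p with
  | nil => simp at hlen
  | cons _ ih =>
    exact ih (by simpa using hlen) (h.isSome_deltaW_cons.mp hu).2 (h.isSome_deltaW_cons.mp hv).2
  | @rel c u b v hcb =>
    have hu' := h.readPos_mem_Ico (h.isSome_deltaW_cons.mp hu).2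
    have hv' := h.readPos_mem_Ico (h.isSome_deltaW_cons.mp hv).2
    have hlen' : u.length = v.length := by simpa using hlen
    calc readPos S p (c :: u) < S^[u.length] (S p + c + 1) := hu'.2
      _ ≤ S^[v.length] (S p + b) := hlen' ▸ h.strictMono.monotone.iterate _ (by omega)
      _ ≤ readPos S p (b :: v) := hv'.1

lemma readPos_lt_of_genLt (h : IsFixedPoint1D ν z S) {u v : List ℕ} (huv : GenLtN u v)
    (hu : (deltaW ν (z 0) u).isSome)
    (hv : (deltaW ν (z 0) v).isSome) (hv0 : v.head? ≠ some 0) :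
    readPos S 0 u < readPos S 0 v := by
  rcases huv with hlt | ⟨hlen, hlex⟩
  · obtain _ | ⟨e, v⟩ := v
    · simp at hlt
    have he : 0 < e := Nat.pos_of_ne_zero (by simpa using hv0)
    have hle : u.length ≤ v.length := by rw [List.length_cons] at hlt; omega
    have hiter : Monotone (fun k => S^[k] 1) := monotone_nat_of_le_succ fun k => by
      rw [Function.iterate_succ_apply]
      have := h.length_pos 0
      exact h.strictMono.monotone.iterate k (by rw [h.succ, h.zero]; omega)
    calc readPos S 0 u < S^[u.length] 1 := (h.readPos_mem_Ico hu).2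
      _ ≤ S^[v.length] 1 := hiter hle
      _ ≤ S^[v.length] (S 0 + e) := h.strictMono.monotone.iterate _ (by rw [h.zero]; omega)
      _ ≤ readPos S 0 (e :: v) := (h.readPos_mem_Ico (h.isSome_deltaW_cons.mp hv).2).1
  · exact h.readPos_lt_of_lex hlex hlen hu hv

lemma lt_apply_of_pos (h : IsFixedPoint1D ν z S) (h2 : 2 ≤ (ν (z 0)).length) {p : ℕ}
    (hp : 0 < p) : p < S p := by
  induction p with
  | zero => omega
  | succ q ih =>
    rcases Nat.eq_zero_or_pos q with rfl | hq
    · rw [h.succ, h.zero]; omega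
    · have := ih hq
      have := h.length_pos q
      rw [h.succ]; omega

/-- The position `N` lies in the block of an earlier position, reached by induction. -/
lemma exists_readPos_eq (h : IsFixedPoint1D ν z S) (h2 : 2 ≤ (ν (z 0)).length) (N : ℕ) :
    ∃ w ∈ directive ν (z 0), readPos S 0 w = N := by
  induction N using Nat.strong_induction_on with
  | _ N ih =>
    rcases Nat.eq_zero_or_pos N with rfl | hN
    · exact ⟨[], ⟨rfl, by simp⟩, rfl⟩
    obtain ⟨p, hpN, hNp⟩ := h.strictMono.exists_between_of_tendsto_atTop
      h.strictMono.tendsto_atTop (x := N + 1) (by rw [h.zero]; omega)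
    have hp : p < N := by
      rcases Nat.eq_zero_or_pos p with rfl | hp
      · exact hN
      · have := h.lt_apply_of_pos h2 hp
        omega
    obtain ⟨w, ⟨hw, hw0⟩, rfl⟩ := ih p hp
    have hd : N - S (readPos S 0 w) < (ν (z (readPos S 0 w))).length := by
      have := h.succ (readPos S 0 w); omega
    refine ⟨w ++ [N - S (readPos S 0 w)], ⟨?_, ?_⟩, ?_⟩
    · rw [deltaW_append, h.deltaW_eq_some hw, Option.bind_some,
        h.isSome_deltaW_cons]
      exact ⟨hd, rfl⟩
    · obtain _ | ⟨c, w⟩ := w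
      · simp only [List.nil_append, List.head?_cons, readPos_nil, h.zero, ne_eq,
          Option.some.injEq]
        omega
      · simpa using hw0
    · rw [readPos_append, readPos_cons, readPos_nil]; omega

lemma two_le_length_of_isANSEnum (h : IsFixedPoint1D ν z S) {rep : ℕ → List ℕ}
    (hrep : IsANSEnum (directive ν (z 0)) rep) : 2 ≤ (ν (z 0)).length := by
  by_contra hlt
  have hnil : ∀ w ∈ directive ν (z 0), w = [] := by
    rintro (_ | ⟨d, w⟩) ⟨hw, hw0⟩
    · rfl
    · have hd : d ≠ 0 := by simpa using hw0
      have := (h.isSome_deltaW_cons.mp hw).1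
      omega
  have h01 := hrep.2.2 0 1 one_pos
  rw [hnil _ (hrep.1 0), hnil _ (hrep.1 1)] at h01
  rcases h01 with h01 | ⟨-, h01⟩
  · simp at h01
  · cases h01

lemma readPos_rep (h : IsFixedPoint1D ν z S) {rep : ℕ → List ℕ}
    (hrep : IsANSEnum (directive ν (z 0)) rep) (n : ℕ) :
    readPos S 0 (rep n) = n := by
  have hmono : StrictMono (fun n => readPos S 0 (rep n)) := fun m n hmn =>
    h.readPos_lt_of_genLt (hrep.2.2 m n hmn) (hrep.1 m).1 (hrep.1 n).1 (hrep.1 n).2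
  have hsurj : Function.Surjective (fun n => readPos S 0 (rep n)) := fun N => by
    obtain ⟨w, hw, rfl⟩ := h.exists_readPos_eq (h.two_le_length_of_isANSEnum hrep) N
    obtain ⟨n, rfl⟩ := hrep.2.1 w hw
    exact ⟨n, rfl⟩
  exact DFunLike.congr_fun
    (Subsingleton.elim (hmono.orderIsoOfSurjective _ hsurj) (OrderIso.refl ℕ)) n

end IsFixedPoint1D

section Picture

variable (μ : σ → Picture σ)

lemma firstRow_getElem? (b : σ) {i : ℕ} (hi : i < (μ b).width) :
    (firstRow μ b)[i]? = some ((μ b).entry i 0) := by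
  simp [firstRow, hi]

lemma firstCol_getElem? (b : σ) {j : ℕ} (hj : j < (μ b).height) :
    (firstCol μ b)[j]? = some ((μ b).entry 0 j) := by
  simp [firstCol, hj]

@[simp] lemma length_firstRow (b : σ) : (firstRow μ b).length = (μ b).width := by
  simp [firstRow]

@[simp] lemma length_firstCol (b : σ) : (firstCol μ b).length = (μ b).height := by
  simp [firstCol]

lemma map_fst_padZero (u v : List ℕ) :
    (padZero u v).map Prod.fst = List.replicate (max u.length v.length - u.length) 0 ++ u :=
  List.map_fst_zip (by simp)

lemma map_snd_padZero (u v : List ℕ) :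
    (padZero u v).map Prod.snd = List.replicate (max u.length v.length - v.length) 0 ++ v :=
  List.map_snd_zip (by simp)

lemma IsFixedPoint2D.exists_blocks {a : σ} {y : ℕ × ℕ → σ} (hfp : IsFixedPoint2D μ a y) :
    ∃ col row : ℕ → ℕ,
      IsFixedPoint1D (firstRow μ) (fun m => y (m, 0)) col ∧
      IsFixedPoint1D (firstCol μ) (fun n => y (0, n)) row ∧
      ∀ p q i j, i < (μ (y (p, 0))).width → j < (μ (y (0, q))).height →
        delta2 μ (y (p, q)) (i, j) = some (y (col p + i, row q + j)) := by
  obtain ⟨-, -, hpos, hW, hH, col, row, hc0, hr0, hcs, hrs, hblock⟩ := hfp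
  refine ⟨col, row,
    ⟨hc0, fun k => by rw [hcs, length_firstRow], fun k => (length_firstRow μ _).symm ▸ (hpos k 0).1, ?_⟩,
    ⟨hr0, fun k => by rw [hrs, length_firstCol], fun k => (length_firstCol μ _).symm ▸ (hpos 0 k).2, ?_⟩, ?_⟩
  · intro k i hi
    rw [length_firstRow] at hi
    simpa [firstRow_getElem? μ _ hi, hr0] using (hblock k 0 i 0 hi (hpos k 0).2).symm
  · intro k j hj
    rw [length_firstCol] at hj
    simpa [firstCol_getElem? μ _ hj, hc0] using (hblock 0 k 0 j (hpos 0 k).1 hj).symm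
  · intro p q i j hi hj
    rw [← hW p q 0] at hi
    rw [← hH p 0 q] at hj
    rw [delta2, if_pos ⟨hi, hj⟩, hblock p q i j hi hj]

variable {μ} {y : ℕ × ℕ → σ} {col row : ℕ → ℕ}

lemma foldlM_delta2 (hrow : IsFixedPoint1D (firstRow μ) (fun m => y (m, 0)) col)
    (hcol : IsFixedPoint1D (firstCol μ) (fun n => y (0, n)) row)
    (hstep : ∀ p q i j, i < (μ (y (p, 0))).width → j < (μ (y (0, q))).height →
      delta2 μ (y (p, q)) (i, j) = some (y (col p + i, row q + j)))
    (uv : List (ℕ × ℕ)) {p q : ℕ}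
    (hu : (deltaW (firstRow μ) (y (p, 0)) (uv.map Prod.fst)).isSome)
    (hv : (deltaW (firstCol μ) (y (0, q)) (uv.map Prod.snd)).isSome) :
    uv.foldlM (delta2 μ) (y (p, q)) =
      some (y (readPos col p (uv.map Prod.fst), readPos row q (uv.map Prod.snd))) := by
  induction uv generalizing p q with
  | nil => rfl
  | cons ij uv ih =>
    obtain ⟨hi, hu⟩ := hrow.isSome_deltaW_cons.mp hu
    obtain ⟨hj, hv⟩ := hcol.isSome_deltaW_cons.mp hv
    rw [length_firstRow] at hi
    rw [length_firstCol] at hj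
    rw [List.foldlM_cons, hstep p q _ _ hi hj]
    exact ih hu hv

lemma foldlM_delta2_padZero (hrow : IsFixedPoint1D (firstRow μ) (fun m => y (m, 0)) col)
    (hcol : IsFixedPoint1D (firstCol μ) (fun n => y (0, n)) row)
    (hstep : ∀ p q i j, i < (μ (y (p, 0))).width → j < (μ (y (0, q))).height →
      delta2 μ (y (p, q)) (i, j) = some (y (col p + i, row q + j)))
    {u v : List ℕ}
    (hu : (deltaW (firstRow μ) (y (0, 0)) u).isSome)
    (hv : (deltaW (firstCol μ) (y (0, 0)) v).isSome) :
    (padZero u v).foldlM (delta2 μ) (y (0, 0)) =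
      some (y (readPos col 0 u, readPos row 0 v)) := by
  rw [foldlM_delta2 hrow hcol hstep, map_fst_padZero, map_snd_padZero,
    readPos_replicate_zero_append hrow.zero, readPos_replicate_zero_append hcol.zero]
  · rwa [map_fst_padZero, deltaW_replicate_zero_append hrow.getElem?_zero]
  · rwa [map_snd_padZero, deltaW_replicate_zero_append hcol.getElem?_zero]

end Picture

end FixedPoint

theorem stmt_13_general {σ : Type*} (μ : σ → Picture σ) (a : σ) (y : ℕ × ℕ → σ)
    (hfp : IsFixedPoint2D μ a y)
    (hcomm : directive (firstRow μ) a = directive (firstCol μ) a)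
    (rep : ℕ → List ℕ) (hrep : IsANSEnum (directive (firstRow μ) a) rep) :
    ∀ m n, List.foldlM (delta2 μ) a (padZero (rep m) (rep n)) = some (y (m, n)) := by
  intro m n
  obtain ⟨col, row, hrow, hcol, hstep⟩ := hfp.exists_blocks
  have hy0 : y (0, 0) = a := hfp.1
  have hrepR : IsANSEnum (directive (firstRow μ) (y (0, 0))) rep := hy0 ▸ hrep
  have hrepC : IsANSEnum (directive (firstCol μ) (y (0, 0))) rep := hy0 ▸ hcomm ▸ hrep
  rw [← hy0, foldlM_delta2_padZero hrow hcol hstep (hrepR.1 m).1 (hrepC.1 n).1,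
    hrow.readPos_rep hrepR, hcol.readPos_rep hrepC]

/-- Let `y = μ^ω(a)` be shape-symmetric, `L` the common directive
language of the morphisms derived from the first row and first column of `y`, and `S`
the abstract numeration system built on `L`.  Then for all `m, n ≥ 0`,
`y(m,n) = δ_μ(a, (rep_S(m), rep_S(n))⁰)`. -/
theorem stmt_13 {σ : Type*} (μ : σ → Picture σ) (a : σ) (y : ℕ × ℕ → σ)
    (hfp : IsFixedPoint2D μ a y) (hss : ShapeSymmetric μ y)
    (hcomm : directive (firstRow μ) a = directive (firstCol μ) a)
    (rep : ℕ → List ℕ) (hrep : IsANSEnum (directive (firstRow μ) a) rep) :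
    ∀ m n, List.foldlM (delta2 μ) a (padZero (rep m) (rep n)) = some (y (m, n)) :=
  stmt_13_general μ a y hfp hcomm rep hrep
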